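/- arXiv:2202.13216 — 3 statements merged into one kernel-verified Lean document; each statement's English description precedes it below -/
import Mathlib

section
/- Suppose Φ : ℝ^d → ℝ^p is such that for all δ with ‖δ‖₂ ≤ r one has ‖Φ(x+δ) - Φ(x)‖₂ ≤ l‖δ‖₂, and let h(x) = A Φ(x) for a matrix A ∈ ℝ^{C×p}. If the predicted label ŷ(x) = argmax_j h(x)_j has positive margin M(h(x), ŷ(x)) > 0, then for any perturbation δ with ‖δ‖₂ ≤ min{r, M(h(x), ŷ(x)) / (2‖A‖₂ l)}, the predicted label is unchanged: argmax_j h(x+δ)_j = ŷ(x). -/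
open Finset

/-- The margin operator `M(v, y) = v_y - max_{j ≠ y} v_j`. -/
noncomputable def margin {C : ℕ} (hne : ∀ y : Fin C, (Finset.univ.erase y).Nonempty)
    (v : EuclideanSpace ℝ (Fin C)) (y : Fin C) : ℝ :=
  v y - (Finset.univ.erase y).sup' (hne y) (fun j => v j)

/-! The margin is `2`-Lipschitz in the scores: no coordinate moves by more than the Euclidean
distance, so neither `v_y` nor `max_{j ≠ y} v_j` does. The perturbation `δ` moves the scores by at
most `‖A‖ l ‖δ‖ ≤ M / 2`, so the margin at `x + δ` stays nonnegative. -/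

lemma margin_sub_two_mul_norm_sub_le {C : ℕ} (hne : ∀ y : Fin C, (Finset.univ.erase y).Nonempty)
    (v w : EuclideanSpace ℝ (Fin C)) (y : Fin C) :
    margin hne v y - 2 * ‖w - v‖ ≤ margin hne w y := by
  have hcoord : ∀ i, |w i - v i| ≤ ‖w - v‖ := fun i => by
    simpa using PiLp.norm_apply_le (w - v) i
  have hy : v y - ‖w - v‖ ≤ w y := by linarith [(abs_le.mp (hcoord y)).1]
  have hsup : (univ.erase y).sup' (hne y) (fun j => w j)
      ≤ (univ.erase y).sup' (hne y) (fun j => v j) + ‖w - v‖ :=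
    sup'_le _ _ fun j hj => by
      linarith [(abs_le.mp (hcoord j)).2, le_sup' (fun j => v j) hj]
  unfold margin
  linarith

theorem certified_radius_general {C d p : ℕ}
    (hne : ∀ y : Fin C, (Finset.univ.erase y).Nonempty)
    (Φ : EuclideanSpace ℝ (Fin d) → EuclideanSpace ℝ (Fin p))
    (A : EuclideanSpace ℝ (Fin p) →L[ℝ] EuclideanSpace ℝ (Fin C))
    (x : EuclideanSpace ℝ (Fin d)) (r l : ℝ) (hl : 0 < l)
    (hΦ : ∀ δ : EuclideanSpace ℝ (Fin d), ‖δ‖ ≤ r → ‖Φ (x + δ) - Φ x‖ ≤ l * ‖δ‖)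
    -- `pred` is the predicted label (argmax with deterministic tie-breaking):
    (pred : EuclideanSpace ℝ (Fin C) → Fin C)
    -- tie-breaking assumption: nonnegative margin w.r.t. `ŷ(x)` implies the label is `ŷ(x)`
    (hpred : ∀ v : EuclideanSpace ℝ (Fin C), 0 ≤ margin hne v (pred (A (Φ x))) →
      pred v = pred (A (Φ x)))
    -- positive classification margin at `x`
    (hmargin : 0 < margin hne (A (Φ x)) (pred (A (Φ x))))
    (δ : EuclideanSpace ℝ (Fin d))
    (hδ : ‖δ‖ ≤ min r (margin hne (A (Φ x)) (pred (A (Φ x))) / (2 * ‖A‖ * l))) :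
    pred (A (Φ (x + δ))) = pred (A (Φ x)) := by
  set M := margin hne (A (Φ x)) (pred (A (Φ x)))
  obtain ⟨hδr, hδM⟩ := le_min_iff.mp hδ
  have hdrift : ‖A (Φ (x + δ)) - A (Φ x)‖ ≤ ‖A‖ * (l * ‖δ‖) := by
    rw [← map_sub]
    exact A.le_opNorm_of_le (hΦ δ hδr)
  have hhalf : ‖A‖ * (l * ‖δ‖) ≤ M / 2 := by
    rcases (norm_nonneg A).eq_or_lt with hA | hA
    · rw [← hA]
      linarith
    · rw [le_div_iff₀ (by positivity)] at hδM
      linarith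
  apply hpred
  linarith [margin_sub_two_mul_norm_sub_le hne (A (Φ x)) (A (Φ (x + δ))) (pred (A (Φ x)))]

/-- Certified robustness for a representation-linear predictor `h = A ∘ Φ` where `Φ`
is locally Lipschitz at `x` with radius `r` and scale `l`:  any perturbation with energy
below `min {r, M(h(x), ŷ(x)) / (2‖A‖ l)}` does not change the predicted label. -/
theorem certified_radius {C d p : ℕ} (hC : 2 ≤ C)
    (hne : ∀ y : Fin C, (Finset.univ.erase y).Nonempty)
    (Φ : EuclideanSpace ℝ (Fin d) → EuclideanSpace ℝ (Fin p))
    (A : EuclideanSpace ℝ (Fin p) →L[ℝ] EuclideanSpace ℝ (Fin C))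
    (x : EuclideanSpace ℝ (Fin d)) (r l : ℝ) (hr : 0 ≤ r) (hl : 0 < l)
    (hΦ : ∀ δ : EuclideanSpace ℝ (Fin d), ‖δ‖ ≤ r → ‖Φ (x + δ) - Φ x‖ ≤ l * ‖δ‖)
    -- `pred` is the predicted label (argmax with deterministic tie-breaking):
    (pred : EuclideanSpace ℝ (Fin C) → Fin C)
    -- tie-breaking assumption: nonnegative margin w.r.t. `ŷ(x)` implies the label is `ŷ(x)`
    (hpred : ∀ v : EuclideanSpace ℝ (Fin C), 0 ≤ margin hne v (pred (A (Φ x))) →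
      pred v = pred (A (Φ x)))
    -- positive classification margin at `x`
    (hmargin : 0 < margin hne (A (Φ x)) (pred (A (Φ x))))
    (δ : EuclideanSpace ℝ (Fin d))
    (hδ : ‖δ‖ ≤ min r (margin hne (A (Φ x)) (pred (A (Φ x))) / (2 * ‖A‖ * l))) :
    pred (A (Φ (x + δ))) = pred (A (Φ x)) :=
  certified_radius_general hne Φ A x r l hl hΦ pred hpred hmargin δ hδ
end

section
/- Let Φ(t) = ReLU(W t + b) with W ∈ ℝ^{p×d}, and suppose t, t' ∈ ℝ^d and there are index sets I_out ⊆ {1,...,p} and I_in ⊆ {1,...,d} such that (a) for all i ∈ I_out, both w_i·t + b_i ≤ 0 and w_i·t' + b_i ≤ 0, and (b) t and t' both vanish on I_in. Then ‖Φ(t') - Φ(t)‖₂ ≤ ‖P_{J_out, J_in}(W)‖₂ · ‖t' - t‖₂, where J_out = I_out^c, J_in = I_in^c, and P_{J_out, J_in}(W) is the submatrix of W with rows in J_out and columns in J_in. -/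
/-!
On the rows in `Iout` both pre-activations are clipped to `0`, so `Φ t' - Φ t` is supported on
`Ioutᶜ`. On the remaining rows ReLU is 1-Lipschitz, so `Φ t' - Φ t` is dominated coordinatewise
by `W (t' - t)`; since `t' - t` is supported on `Iinᶜ`, those coordinates are the reduced matrix
applied to the restriction of `t' - t` to `Iinᶜ`, whose norm is at most `‖t' - t‖`.
-/

open Finset

/-- Operator norm (w.r.t. Euclidean vector norms) of a real matrix. -/
noncomputable def opNorm {α β : Type*} [Fintype α] [Fintype β] [DecidableEq β]
    (M : Matrix α β ℝ) : ℝ :=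
  ‖LinearMap.toContinuousLinearMap (Matrix.toEuclideanLin M)‖

open Matrix

namespace EuclideanSpace

variable {ι : Type*}

def restrict (s : Finset ι) (v : EuclideanSpace ℝ ι) : EuclideanSpace ℝ s :=
  WithLp.toLp 2 (s.restrict v.ofLp)

@[simp]
lemma restrict_apply (s : Finset ι) (v : EuclideanSpace ℝ ι) (i : s) : restrict s v i = v i :=
  rfl

lemma norm_sq_restrict (s : Finset ι) (v : EuclideanSpace ℝ ι) :
    ‖restrict s v‖ ^ 2 = ∑ i ∈ s, ‖v i‖ ^ 2 := by
  rw [EuclideanSpace.norm_sq_eq, ← sum_coe_sort s]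
  rfl

variable [Fintype ι]

lemma norm_restrict_le (s : Finset ι) (v : EuclideanSpace ℝ ι) : ‖restrict s v‖ ≤ ‖v‖ := by
  refine sq_le_sq₀ (norm_nonneg _) (norm_nonneg _) |>.mp ?_
  rw [norm_sq_restrict, EuclideanSpace.norm_sq_eq]
  exact sum_le_univ_sum_of_nonneg fun i => sq_nonneg ‖v i‖

lemma norm_restrict_of_eq_zero {s : Finset ι} {v : EuclideanSpace ℝ ι}
    (hv : ∀ i ∉ s, v i = 0) : ‖restrict s v‖ = ‖v‖ := by
  refine (sq_eq_sq₀ (norm_nonneg _) (norm_nonneg _)).mp ?_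
  rw [norm_sq_restrict, EuclideanSpace.norm_sq_eq]
  exact sum_subset (subset_univ s) fun i _ hi => by simp [hv i hi]

lemma norm_le_norm_of_abs_le {v w : EuclideanSpace ℝ ι} (h : ∀ i, |v i| ≤ |w i|) :
    ‖v‖ ≤ ‖w‖ := by
  refine sq_le_sq₀ (norm_nonneg _) (norm_nonneg _) |>.mp ?_
  rw [EuclideanSpace.norm_sq_eq, EuclideanSpace.norm_sq_eq]
  exact sum_le_sum fun i _ => by
    simpa only [Real.norm_eq_abs, sq_abs] using sq_le_sq.mpr (h i)

end EuclideanSpace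

lemma Matrix.submatrix_val_mulVec_restrict {α κ ι R : Type*} [Fintype ι]
    [NonUnitalNonAssocSemiring R]
    (W : Matrix κ ι R) (r : α → κ) {s : Finset ι} {v : ι → R} (hv : ∀ j ∉ s, v j = 0) :
    W.submatrix r Subtype.val *ᵥ s.restrict v = (W *ᵥ v) ∘ r := by
  ext i
  simp only [mulVec, dotProduct, submatrix_apply, Finset.restrict, Function.comp_apply]
  rw [sum_coe_sort s (fun j => W (r i) j * v j)]
  exact sum_subset (subset_univ s) fun j _ hj => by simp [hv j hj]

lemma Matrix.norm_toEuclideanLin_le {α β : Type*} [Fintype α] [Fintype β] [DecidableEq β]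
    (M : Matrix α β ℝ) (u : EuclideanSpace ℝ β) :
    ‖M.toEuclideanLin u‖ ≤ opNorm M * ‖u‖ :=
  (LinearMap.toContinuousLinearMap M.toEuclideanLin).le_opNorm u

lemma abs_relu_sub_relu_le {κ ι : Type*} [Fintype ι] (W : Matrix κ ι ℝ) (b : κ → ℝ)
    (x y : ι → ℝ) (i : κ) :
    |max ((W *ᵥ x) i + b i) 0 - max ((W *ᵥ y) i + b i) 0| ≤ |(W *ᵥ (x - y)) i| := by
  rw [mulVec_sub, Pi.sub_apply, ← add_sub_add_right_eq_sub ((W *ᵥ x) i) _ (b i)]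
  exact abs_max_sub_max_le_abs _ _ _

/-- ReLU layer Lipschitz bound via the reduced submatrix: if `t, t'` share the inactive
output index set `I_out` and both vanish on `I_in`, then
`‖Φ(t') - Φ(t)‖₂ ≤ ‖P_{J_out, J_in}(W)‖₂ · ‖t' - t‖₂`. -/
theorem relu_layer_reduced_lipschitz {p d : ℕ}
    (W : Matrix (Fin p) (Fin d) ℝ) (b : Fin p → ℝ)
    (t t' : EuclideanSpace ℝ (Fin d))
    (Iout : Finset (Fin p)) (Iin : Finset (Fin d))
    (hout : ∀ i ∈ Iout, (∑ j, W i j * t j) + b i ≤ 0 ∧ (∑ j, W i j * t' j) + b i ≤ 0)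
    (hin : ∀ j ∈ Iin, t j = 0 ∧ t' j = 0)
    (Φ : EuclideanSpace ℝ (Fin d) → EuclideanSpace ℝ (Fin p))
    (hΦ : Φ = fun u => WithLp.toLp 2 (fun i => max ((∑ j, W i j * u j) + b i) 0 : Fin p → ℝ)) :
    ‖Φ t' - Φ t‖ ≤
      opNorm (Matrix.submatrix W
          (fun i : {i : Fin p // i ∈ Ioutᶜ} => (i : Fin p))
          (fun j : {j : Fin d // j ∈ Iinᶜ} => (j : Fin d))) * ‖t' - t‖ := by
  have hΦ_apply (u : EuclideanSpace ℝ (Fin d)) (i : Fin p) :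
      Φ u i = max ((∑ j, W i j * u j) + b i) 0 := by
    rw [hΦ]
  set M := W.submatrix (fun i : {i // i ∈ Ioutᶜ} => (i : Fin p))
    (fun j : {j // j ∈ Iinᶜ} => (j : Fin d))
  have hδ : ∀ j ∉ Iinᶜ, (t' - t) j = 0 := fun j hj => by
    obtain ⟨h, h'⟩ := hin j (by simpa using hj)
    simp [h, h']
  have hinactive : ∀ i ∉ Ioutᶜ, (Φ t' - Φ t) i = 0 := fun i hi => by
    obtain ⟨h, h'⟩ := hout i (by simpa using hi)
    rw [PiLp.sub_apply, hΦ_apply, hΦ_apply, max_eq_right h, max_eq_right h', sub_zero]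
  have hactive (i : {i // i ∈ Ioutᶜ}) :
      (M.toEuclideanLin (EuclideanSpace.restrict Iinᶜ (t' - t))) i = (W *ᵥ (t' - t).ofLp) i :=
    congrFun (W.submatrix_val_mulVec_restrict _ hδ) i
  calc ‖Φ t' - Φ t‖ = ‖EuclideanSpace.restrict Ioutᶜ (Φ t' - Φ t)‖ :=
        (EuclideanSpace.norm_restrict_of_eq_zero hinactive).symm
    _ ≤ ‖M.toEuclideanLin (EuclideanSpace.restrict Iinᶜ (t' - t))‖ :=
        EuclideanSpace.norm_le_norm_of_abs_le fun i => by
          rw [EuclideanSpace.restrict_apply, PiLp.sub_apply, hΦ_apply, hΦ_apply, hactive]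
          exact abs_relu_sub_relu_le W b _ _ i
    _ ≤ opNorm M * ‖EuclideanSpace.restrict Iinᶜ (t' - t)‖ := M.norm_toEuclideanLin_le _
    _ ≤ opNorm M * ‖t' - t‖ := by
        gcongr
        · exact norm_nonneg _
        · exact EuclideanSpace.norm_restrict_le _ _
end

section
/- For any matrix W ∈ ℝ^{d₁×d₂} with nonzero rows and any nonempty index sets J₁ ⊆ {1,...,d₁}, J₂ ⊆ {1,...,d₂} with |J₁| = d₁ - s₁ and |J₂| = d₂ - s₂, the operator norm of the submatrix P_{J₁,J₂}(W) satisfies ‖P_{J₁,J₂}(W)‖₂ ≤ √(1 + μ_{s₁,s₂}(W)) · ‖W‖_{2,∞}, where μ_{s₁,s₂}(W) is the reduced babel function defined below. -/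
open Finset

/-- Inner product of rows `i` and `j` of `W` restricted to the columns in `J₂`. -/
def pInner {d₁ d₂ : ℕ} (W : Matrix (Fin d₁) (Fin d₂) ℝ) (J₂ : Finset (Fin d₂))
    (i j : Fin d₁) : ℝ := ∑ k ∈ J₂, W i k * W j k

/-- Euclidean norm of row `i` of `W` restricted to the columns in `J₂`. -/
noncomputable def pNorm {d₁ d₂ : ℕ} (W : Matrix (Fin d₁) (Fin d₂) ℝ) (J₂ : Finset (Fin d₂))
    (i : Fin d₁) : ℝ := Real.sqrt (∑ k ∈ J₂, (W i k) ^ 2)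

/-- Normalized coherence between rows `i` and `j` restricted to columns `J₂`. -/
noncomputable def redCoh {d₁ d₂ : ℕ} (W : Matrix (Fin d₁) (Fin d₂) ℝ) (J₂ : Finset (Fin d₂))
    (i j : Fin d₁) : ℝ := |pInner W J₂ i j| / (pNorm W J₂ i * pNorm W J₂ j)

/-- The reduced babel function `μ_{s₁,s₂}(W)`. -/
noncomputable def redBabel {d₁ d₂ : ℕ} (W : Matrix (Fin d₁) (Fin d₂) ℝ) (s₁ s₂ : ℕ) : ℝ :=
  sSup {x : ℝ | ∃ J₁ : Finset (Fin d₁), J₁.card = d₁ - s₁ ∧ ∃ j ∈ J₁,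
    x = ∑ i ∈ J₁.erase j,
      sSup {y : ℝ | ∃ J₂ : Finset (Fin d₂), J₂.card = d₂ - s₂ ∧ y = redCoh W J₂ i j}}

/-- The `(2,∞)` group norm of `W` : the maximal Euclidean norm of a row. -/
noncomputable def norm2inf {d₁ d₂ : ℕ} [NeZero d₁] (W : Matrix (Fin d₁) (Fin d₂) ℝ) : ℝ :=
  Finset.univ.sup' Finset.univ_nonempty (fun i => pNorm W Finset.univ i)

/-!
The Gram matrix `G = P Pᵀ` of the submatrix `P = P_{J₁,J₂}(W)` has entries
`⟨P_{J₂}(w_i), P_{J₂}(w_j)⟩`, and `‖P‖² = ‖G‖`. A diagonal entry is at most `‖W‖²_{2,∞}` and an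
off-diagonal one at most the coherence of the two restricted rows times `‖W‖²_{2,∞}`, so every
absolute row sum of `G` is at most `(1 + μ_{s₁,s₂}(W)) ‖W‖²_{2,∞}`. For the symmetric matrix `G`
this bounds `‖G‖` (Gerschgorin), here in the form of the Schur test, which follows from the
weighted Cauchy–Schwarz inequality `(∑ⱼ Gᵢⱼ xⱼ)² ≤ (∑ⱼ |Gᵢⱼ|) (∑ⱼ |Gᵢⱼ| xⱼ²)`.
-/

open scoped Matrix Matrix.Norms.L2Operator

namespace Matrix

theorem l2_opNorm_le_of_sum_abs_le {m n : Type*} [Fintype m] [Fintype n] [DecidableEq n]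
    (G : Matrix m n ℝ) {r c : ℝ} (hr₀ : 0 ≤ r)
    (hr : ∀ i, ∑ j, |G i j| ≤ r) (hc : ∀ j, ∑ i, |G i j| ≤ c) :
    ‖G‖ ≤ √(r * c) := by
  refine ContinuousLinearMap.opNorm_le_bound _ (Real.sqrt_nonneg _) fun x => ?_
  have hrow : ∀ i, (∑ j, G i j * x j) ^ 2 ≤ r * ∑ j, |G i j| * x j ^ 2 := fun i =>
    (sum_sq_le_sum_mul_sum_of_sq_le_mul _ (fun j _ => abs_nonneg (G i j))
      (fun j _ => by positivity) (fun j _ => by rw [mul_pow, ← mul_assoc, ← sq, sq_abs])).trans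
      (mul_le_mul_of_nonneg_right (hr i) (sum_nonneg fun j _ => by positivity))
  have hsq : ‖(toEuclideanLin G) x‖ ^ 2 ≤ r * c * ‖x‖ ^ 2 := by
    simp only [EuclideanSpace.real_norm_sq_eq, toLpLin_apply, mulVec, dotProduct]
    calc ∑ i, (∑ j, G i j * x j) ^ 2 ≤ ∑ i, r * ∑ j, |G i j| * x j ^ 2 :=
          sum_le_sum fun i _ => hrow i
      _ = r * ∑ j, (∑ i, |G i j|) * x j ^ 2 := by rw [← mul_sum, sum_comm]; simp_rw [sum_mul]
      _ ≤ r * ∑ j, c * x j ^ 2 := by gcongr with j; exact hc j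
      _ = r * c * ∑ j, x j ^ 2 := by rw [← mul_sum, mul_assoc]
  calc _ = √(‖(toEuclideanLin G) x‖ ^ 2) := (Real.sqrt_sq (norm_nonneg _)).symm
    _ ≤ √(r * c * ‖x‖ ^ 2) := Real.sqrt_le_sqrt hsq
    _ = √(r * c) * ‖x‖ := by rw [Real.sqrt_mul' _ (sq_nonneg _), Real.sqrt_sq (norm_nonneg _)]

theorem l2_opNorm_le_sqrt_of_sum_abs_mul_transpose_le {m n : Type*} [Fintype m]
    [Fintype n] [DecidableEq m] [DecidableEq n] (A : Matrix m n ℝ) {R : ℝ} (hR : 0 ≤ R)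
    (h : ∀ i, ∑ j, |(A * Aᵀ) i j| ≤ R) : ‖A‖ ≤ √R := by
  have hsymm : (A * Aᵀ).IsSymm := by
    rw [IsSymm, transpose_mul, transpose_transpose]
  refine Real.le_sqrt_of_sq_le ?_
  calc ‖A‖ ^ 2 = ‖Aᵀ‖ * ‖Aᵀ‖ := by
        rw [sq, ← conjTranspose_eq_transpose_of_trivial, l2_opNorm_conjTranspose]
    _ = ‖A * Aᵀ‖ := by
        rw [← l2_opNorm_conjTranspose_mul_self, conjTranspose_eq_transpose_of_trivial,
          transpose_transpose]
    _ ≤ √(R * R) := (A * Aᵀ).l2_opNorm_le_of_sum_abs_le hR h fun j => by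
        simpa only [hsymm.apply j] using h j
    _ = R := Real.sqrt_mul_self hR

end Matrix

section RowGeometry

variable {d₁ d₂ : ℕ} (W : Matrix (Fin d₁) (Fin d₂) ℝ) (J₂ : Finset (Fin d₂))

theorem pInner_comm (i j : Fin d₁) : pInner W J₂ i j = pInner W J₂ j i :=
  sum_congr rfl fun _ _ => mul_comm _ _

theorem pInner_self (i : Fin d₁) : pInner W J₂ i i = pNorm W J₂ i ^ 2 := by
  rw [pNorm, Real.sq_sqrt (sum_nonneg fun _ _ => sq_nonneg _), pInner]
  simp only [sq]

theorem abs_pInner_le (i j : Fin d₁) : |pInner W J₂ i j| ≤ pNorm W J₂ i * pNorm W J₂ j := by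
  rw [pNorm, pNorm, ← Real.sqrt_mul (sum_nonneg fun _ _ => sq_nonneg _), ← Real.sqrt_sq_eq_abs]
  exact Real.sqrt_le_sqrt (sum_mul_sq_le_sq_mul_sq _ _ _)

theorem redCoh_nonneg (i j : Fin d₁) : 0 ≤ redCoh W J₂ i j :=
  div_nonneg (abs_nonneg _) (mul_nonneg (Real.sqrt_nonneg _) (Real.sqrt_nonneg _))

/-- If a restricted row vanishes, `redCoh` is `0` by the convention `x / 0 = 0`, and so is the
inner product. -/
theorem abs_pInner_eq_redCoh_mul (i j : Fin d₁) :
    |pInner W J₂ i j| = redCoh W J₂ i j * (pNorm W J₂ i * pNorm W J₂ j) := by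
  by_cases h : pNorm W J₂ i * pNorm W J₂ j = 0
  · rw [h, mul_zero]
    exact le_antisymm (h ▸ abs_pInner_le W J₂ i j) (abs_nonneg _)
  · rw [redCoh, div_mul_cancel₀ _ h]

variable [NeZero d₁]

theorem pNorm_le_norm2inf (i : Fin d₁) : pNorm W J₂ i ≤ norm2inf W :=
  (Real.sqrt_le_sqrt (sum_le_sum_of_subset_of_nonneg (subset_univ J₂)
    fun _ _ _ => sq_nonneg _)).trans (le_sup' (fun i => pNorm W univ i) (mem_univ i))

theorem abs_pInner_le_redCoh_mul (i j : Fin d₁) :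
    |pInner W J₂ i j| ≤ redCoh W J₂ i j * norm2inf W ^ 2 := by
  rw [abs_pInner_eq_redCoh_mul, sq]
  gcongr
  · exact redCoh_nonneg W J₂ i j
  · exact Real.sqrt_nonneg _
  · exact (Real.sqrt_nonneg _).trans (pNorm_le_norm2inf W J₂ i)
  all_goals exact pNorm_le_norm2inf W J₂ _

theorem abs_pInner_self_le (i : Fin d₁) : |pInner W J₂ i i| ≤ norm2inf W ^ 2 := by
  rw [pInner_self, abs_sq]
  exact pow_le_pow_left₀ (Real.sqrt_nonneg _) (pNorm_le_norm2inf W J₂ i) 2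

end RowGeometry

section Babel

variable {d₁ d₂ : ℕ} (W : Matrix (Fin d₁) (Fin d₂) ℝ) {s₁ s₂ : ℕ}

theorem redBabel_nonneg (s₁ s₂ : ℕ) : 0 ≤ redBabel W s₁ s₂ := by
  refine Real.sSup_nonneg ?_
  rintro _ ⟨J₁, -, j, -, rfl⟩
  refine sum_nonneg fun i _ => Real.sSup_nonneg ?_
  rintro _ ⟨J₂, -, rfl⟩
  exact redCoh_nonneg W J₂ i j

theorem redCoh_le_sSup {J₂ : Finset (Fin d₂)} (hJ₂ : J₂.card = d₂ - s₂) (i j : Fin d₁) :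
    redCoh W J₂ i j ≤
      sSup {y : ℝ | ∃ J₂ : Finset (Fin d₂), J₂.card = d₂ - s₂ ∧ y = redCoh W J₂ i j} := by
  refine le_csSup ((Set.finite_range fun J : Finset (Fin d₂) => redCoh W J i j).subset ?_
    |>.bddAbove) ⟨J₂, hJ₂, rfl⟩
  rintro _ ⟨J, -, rfl⟩
  exact ⟨J, rfl⟩

theorem sum_redCoh_le_redBabel {J₁ : Finset (Fin d₁)} {J₂ : Finset (Fin d₂)}
    (hJ₁ : J₁.card = d₁ - s₁) (hJ₂ : J₂.card = d₂ - s₂) {j : Fin d₁} (hj : j ∈ J₁) :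
    ∑ i ∈ J₁.erase j, redCoh W J₂ i j ≤ redBabel W s₁ s₂ := by
  refine (sum_le_sum fun i _ => redCoh_le_sSup W hJ₂ i j).trans (le_csSup ?_ ⟨J₁, hJ₁, j, hj, rfl⟩)
  refine (Set.finite_range fun p : Finset (Fin d₁) × Fin d₁ => ∑ i ∈ p.1.erase p.2,
    sSup {y : ℝ | ∃ J₂ : Finset (Fin d₂), J₂.card = d₂ - s₂ ∧ y = redCoh W J₂ i p.2}).subset
    ?_ |>.bddAbove
  rintro _ ⟨J, _, k, _, rfl⟩
  exact ⟨(J, k), rfl⟩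

theorem sum_abs_pInner_le [NeZero d₁] {J₁ : Finset (Fin d₁)} {J₂ : Finset (Fin d₂)}
    (hJ₁ : J₁.card = d₁ - s₁) (hJ₂ : J₂.card = d₂ - s₂) {j : Fin d₁} (hj : j ∈ J₁) :
    ∑ i ∈ J₁, |pInner W J₂ i j| ≤ (1 + redBabel W s₁ s₂) * norm2inf W ^ 2 := by
  rw [← add_sum_erase _ _ hj, add_mul, one_mul]
  gcongr
  · exact abs_pInner_self_le W J₂ j
  · calc ∑ i ∈ J₁.erase j, |pInner W J₂ i j|
        ≤ ∑ i ∈ J₁.erase j, redCoh W J₂ i j * norm2inf W ^ 2 :=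
          sum_le_sum fun i _ => abs_pInner_le_redCoh_mul W J₂ i j
      _ ≤ redBabel W s₁ s₂ * norm2inf W ^ 2 := by
          rw [← sum_mul]
          exact mul_le_mul_of_nonneg_right (sum_redCoh_le_redBabel W hJ₁ hJ₂ hj) (sq_nonneg _)

end Babel

theorem submatrix_opNorm_le_babel_general {d₁ d₂ : ℕ} [NeZero d₁]
    (W : Matrix (Fin d₁) (Fin d₂) ℝ)
    (s₁ s₂ : ℕ)
    (J₁ : Finset (Fin d₁)) (J₂ : Finset (Fin d₂))
    (hJ₁ : J₁.card = d₁ - s₁) (hJ₂ : J₂.card = d₂ - s₂) :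
    opNorm (Matrix.submatrix W
        (fun i : {i : Fin d₁ // i ∈ J₁} => (i : Fin d₁))
        (fun j : {j : Fin d₂ // j ∈ J₂} => (j : Fin d₂)))
      ≤ Real.sqrt (1 + redBabel W s₁ s₂) * norm2inf W := by
  set A := W.submatrix (fun i : J₁ => (i : Fin d₁)) (fun j : J₂ => (j : Fin d₂))
  have hB : 0 ≤ norm2inf W := (Real.sqrt_nonneg _).trans (pNorm_le_norm2inf W univ 0)
  have hR : 0 ≤ (1 + redBabel W s₁ s₂) * norm2inf W ^ 2 := by
    have := redBabel_nonneg W s₁ s₂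
    positivity
  have hgram : ∀ i j, (A * Aᵀ) i j = pInner W J₂ i j := fun i j =>
    sum_coe_sort J₂ fun k => W i k * W j k
  have hrow : ∀ i, ∑ j, |(A * Aᵀ) i j| ≤ (1 + redBabel W s₁ s₂) * norm2inf W ^ 2 := by
    intro i
    simp only [hgram, pInner_comm W J₂ i]
    exact (sum_coe_sort J₁ fun j => |pInner W J₂ j i|).trans_le (sum_abs_pInner_le W hJ₁ hJ₂ i.2)
  calc opNorm A = ‖A‖ := rfl
    _ ≤ √((1 + redBabel W s₁ s₂) * norm2inf W ^ 2) :=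
      A.l2_opNorm_le_sqrt_of_sum_abs_mul_transpose_le hR hrow
    _ = √(1 + redBabel W s₁ s₂) * norm2inf W := by
      rw [Real.sqrt_mul' _ (sq_nonneg _), Real.sqrt_sq hB]

/-- Bound on the operator norm of any submatrix via the reduced babel function:
`‖P_{J₁,J₂}(W)‖₂ ≤ √(1 + μ_{s₁,s₂}(W)) · ‖W‖_{2,∞}`. -/
theorem submatrix_opNorm_le_babel {d₁ d₂ : ℕ} [NeZero d₁] [NeZero d₂]
    (W : Matrix (Fin d₁) (Fin d₂) ℝ)
    (hrows : ∀ i, pNorm W Finset.univ i ≠ 0)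
    (s₁ s₂ : ℕ) (hs₁ : s₁ ≤ d₁ - 1) (hs₂ : s₂ ≤ d₂ - 1)
    (J₁ : Finset (Fin d₁)) (J₂ : Finset (Fin d₂))
    (hJ₁ : J₁.card = d₁ - s₁) (hJ₂ : J₂.card = d₂ - s₂)
    (hJ₁ne : J₁.Nonempty) (hJ₂ne : J₂.Nonempty) :
    opNorm (Matrix.submatrix W
        (fun i : {i : Fin d₁ // i ∈ J₁} => (i : Fin d₁))
        (fun j : {j : Fin d₂ // j ∈ J₂} => (j : Fin d₂)))
      ≤ Real.sqrt (1 + redBabel W s₁ s₂) * norm2inf W :=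
  submatrix_opNorm_le_babel_general W s₁ s₂ J₁ J₂ hJ₁ hJ₂
end
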